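/- Let (X,r) be a square-free solution of finite order |X| = n with cyclic degree p, let G = G(X,r), and let F_p be the subgroup of G generated by {ι(x)^p : x ∈ X}. Then F_p is a normal subgroup of G. -/

import Mathlib

/-- The left action `σ_x(y)`: first component of `r (x, y)`. -/
def sig {X : Type*} (r : X × X → X × X) (x y : X) : X := (r (x, y)).1

/-- The right action `τ_y(x)`: second component of `r (x, y)`. -/
def tau {X : Type*} (r : X × X → X × X) (y x : X) : X := (r (x, y)).2

/-- `r¹² = r × id`. -/
def r12 {X : Type*} (r : X × X → X × X) : X × X × X → X × X × X :=
  fun t => ((r (t.1, t.2.1)).1, (r (t.1, t.2.1)).2, t.2.2)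

/-- `r²³ = id × r`. -/
def r23 {X : Type*} (r : X × X → X × X) : X × X × X → X × X × X :=
  fun t => (t.1, (r (t.2.1, t.2.2)).1, (r (t.2.1, t.2.2)).2)

/-- The braid relation `r¹² ∘ r²³ ∘ r¹² = r²³ ∘ r¹² ∘ r²³`. -/
def IsBraided {X : Type*} (r : X × X → X × X) : Prop :=
  r12 r ∘ r23 r ∘ r12 r = r23 r ∘ r12 r ∘ r23 r

/-- Nondegeneracy: every `σ_x` and every `τ_y` is bijective. -/
def Nondegenerate {X : Type*} (r : X × X → X × X) : Prop :=
  (∀ x, Function.Bijective (sig r x)) ∧ (∀ y, Function.Bijective (tau r y))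

/-- The defining relators of the group `G(X,r)`:
`x · y · (σ_x(y) · τ_y(x))⁻¹` for all `x, y ∈ X`. -/
def ybRels {X : Type*} (r : X × X → X × X) : Set (FreeGroup X) :=
  { w | ∃ x y : X, w = FreeGroup.of x * FreeGroup.of y *
      (FreeGroup.of (sig r x y) * FreeGroup.of (tau r y x))⁻¹ }

/-- The group `G(X,r)` associated with `(X,r)`, presented by generators `X`
and relations `x y = σ_x(y) τ_y(x)`. -/
abbrev YBGroup {X : Type*} (r : X × X → X × X) := PresentedGroup (ybRels r)

/-- The canonical map `ι : X → G(X,r)`. -/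
def ybι {X : Type*} (r : X × X → X × X) : X → YBGroup r := PresentedGroup.of

/-!
In a square-free solution `τ_x = σ_x⁻¹` and the cyclic condition `σ_{τ_x z}(x) = σ_z(x)` holds.
Pushing `ι(y)` through `ι(x)^k` with the defining relations then gives
`ι(y) ι(x)^k = ι(σ_y x)^k ι(τ_x^k y)`, so for `k = p` conjugation by the generator `ι(y)`
permutes the generating set `{ι(x)^p}` of `F_p` (as `σ_y` does `X`). A subgroup whose generating
set is stable under conjugation by a generating set of `G` is normal.
-/

open Function

theorem Subgroup.closure_normal_of_conj_image_eq {G : Type*} [Group G] {S T : Set G}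
    (hT : Subgroup.closure T = ⊤) (hS : ∀ t ∈ T, MulAut.conj t '' S = S) :
    (Subgroup.closure S).Normal := by
  rw [← Subgroup.normalizer_eq_top_iff, eq_top_iff, ← hT, Subgroup.closure_le]
  exact fun t ht => Subgroup.normalizer_le_normalizer_closure S
    (Subgroup.mem_normalizer_iff_conj_image_eq.mpr (hS t ht))

section SquareFree

variable {X : Type*} {r : X × X → X × X}

theorem sig_sig_tau_of_involutive (hinv : Involutive r) (x y : X) :
    sig r (sig r x y) (tau r y x) = x :=
  congrArg Prod.fst (hinv (x, y))

theorem tau_tau_sig_of_involutive (hinv : Involutive r) (x y : X) :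
    tau r (tau r y x) (sig r x y) = y :=
  congrArg Prod.snd (hinv (x, y))

theorem sig_sig_of_isBraided (hbr : IsBraided r) (x y z : X) :
    sig r (sig r x y) (sig r (tau r y x) z) = sig r x (sig r y z) := by
  simpa [r12, r23, sig, tau] using congrArg Prod.fst (congrFun hbr (x, y, z))

theorem sig_self_of_squareFree (hsf : ∀ x : X, r (x, x) = (x, x)) (x : X) :
    sig r x x = x :=
  congrArg Prod.fst (hsf x)

/-- For square-free solutions `τ_y` is the inverse of `σ_y`: the braid relation at `(x, y, τ_y x)`,
simplified by square-freeness and involutivity, reads `σ_x x = σ_x (σ_y (τ_y x))`. -/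
theorem sig_tau_of_squareFree (hσ : ∀ x, Injective (sig r x)) (hinv : Involutive r)
    (hbr : IsBraided r) (hsf : ∀ x : X, r (x, x) = (x, x)) (x y : X) :
    sig r y (tau r y x) = x := by
  have h := sig_sig_of_isBraided hbr x y (tau r y x)
  rw [sig_self_of_squareFree hsf (tau r y x), sig_sig_tau_of_involutive hinv] at h
  exact (hσ x ((sig_self_of_squareFree hsf x).trans h)).symm

theorem sig_tau_eq_sig_of_squareFree (hσ : ∀ x, Injective (sig r x)) (hinv : Involutive r)
    (hbr : IsBraided r) (hsf : ∀ x : X, r (x, x) = (x, x)) (x z : X) :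
    sig r (tau r x z) x = sig r z x := by
  have h := congrArg (sig r (tau r x z)) (tau_tau_sig_of_involutive hinv z x)
  rwa [sig_tau_of_squareFree hσ hinv hbr hsf, eq_comm] at h

theorem sig_iterate_tau_eq_sig_of_squareFree (hσ : ∀ x, Injective (sig r x))
    (hinv : Involutive r) (hbr : IsBraided r) (hsf : ∀ x : X, r (x, x) = (x, x))
    (x z : X) (k : ℕ) :
    sig r ((tau r x)^[k] z) x = sig r z x := by
  have h : Semiconj (fun z => sig r z x) (tau r x) id :=
    sig_tau_eq_sig_of_squareFree hσ hinv hbr hsf x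
  simpa only [iterate_id, id_eq] using h.iterate_right k z

theorem tau_iterate_eq_self_of_squareFree (hσ : ∀ x, Injective (sig r x))
    (hinv : Involutive r) (hbr : IsBraided r) (hsf : ∀ x : X, r (x, x) = (x, x))
    {p : ℕ} (hpord : ∀ x : X, (sig r x)^[p] = id) (x y : X) :
    (tau r x)^[p] y = y := by
  have h : LeftInverse (sig r x) (tau r x) := fun y => sig_tau_of_squareFree hσ hinv hbr hsf y x
  simpa only [hpord x, id_eq] using h.iterate p y

end SquareFree

section YBGroup

variable {X : Type*} (r : X × X → X × X)

theorem ybι_mul_ybι (x y : X) :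
    ybι r x * ybι r y = ybι r (sig r x y) * ybι r (tau r y x) :=
  PresentedGroup.mk_eq_mk_of_mul_inv_mem ⟨x, y, rfl⟩

variable {r}

theorem ybι_mul_ybι_pow_of_squareFree (hσ : ∀ x, Injective (sig r x)) (hinv : Involutive r)
    (hbr : IsBraided r) (hsf : ∀ x : X, r (x, x) = (x, x)) (x y : X) (k : ℕ) :
    ybι r y * ybι r x ^ k = ybι r (sig r y x) ^ k * ybι r ((tau r x)^[k] y) := by
  induction k with
  | zero => simp
  | succ k ih =>
    rw [pow_succ, ← mul_assoc, ih, mul_assoc, ybι_mul_ybι,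
      sig_iterate_tau_eq_sig_of_squareFree hσ hinv hbr hsf, ← mul_assoc, ← pow_succ,
      iterate_succ_apply']

theorem ybι_conj_pow_of_squareFree (hσ : ∀ x, Injective (sig r x)) (hinv : Involutive r)
    (hbr : IsBraided r) (hsf : ∀ x : X, r (x, x) = (x, x))
    {p : ℕ} (hpord : ∀ x : X, (sig r x)^[p] = id) (x y : X) :
    MulAut.conj (ybι r y) (ybι r x ^ p) = ybι r (sig r y x) ^ p := by
  rw [MulAut.conj_apply, ybι_mul_ybι_pow_of_squareFree hσ hinv hbr hsf,
    tau_iterate_eq_self_of_squareFree hσ hinv hbr hsf hpord, mul_inv_cancel_right]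

end YBGroup

theorem Fp_normal_general {X : Type*} (r : X × X → X × X)
    (hnd : Nondegenerate r) (hinv : Function.Involutive r) (hbr : IsBraided r)
    (hsf : ∀ x : X, r (x, x) = (x, x)) (p : ℕ)
    (hpord : ∀ x : X, (sig r x)^[p] = id) :
    (Subgroup.closure (Set.range fun x : X => ybι r x ^ p)).Normal := by
  have hσ : ∀ x, Injective (sig r x) := fun x => (hnd.1 x).1
  refine Subgroup.closure_normal_of_conj_image_eq (PresentedGroup.closure_range_of _) ?_
  rintro _ ⟨y, rfl⟩
  rw [← Set.range_comp]
  change Set.range (fun x => MulAut.conj (ybι r y) (ybι r x ^ p)) = _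
  simp_rw [ybι_conj_pow_of_squareFree hσ hinv hbr hsf hpord]
  exact (hnd.1 y).2.range_comp (fun x => ybι r x ^ p)

/-- For a finite square-free solution `(X,r)` with cyclic
degree `p`, the subgroup `F_p` of `G = G(X,r)` generated by
`{ι(x)^p : x ∈ X}` is a normal subgroup of `G`. -/
theorem Fp_normal {X : Type*} [Fintype X] (r : X × X → X × X)
    (hnd : Nondegenerate r) (hinv : Function.Involutive r) (hbr : IsBraided r)
    (hsf : ∀ x : X, r (x, x) = (x, x)) (p : ℕ) (hp : 0 < p)
    (hpord : ∀ x : X, (sig r x)^[p] = id)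
    (hpmin : ∀ q : ℕ, 0 < q → (∀ x : X, (sig r x)^[q] = id) → p ≤ q) :
    (Subgroup.closure (Set.range fun x : X => ybι r x ^ p)).Normal :=
  Fp_normal_general r hnd hinv hbr hsf p hpord
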